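/- arXiv:2010.02581 — 5 statements merged into one kernel-verified Lean document; each statement's English description precedes it below -/
import Mathlib

section
/- Let X be a topological space and B : X → SL(2,ℂ) a continuous map. Suppose λ : X → ℂ is continuous and for every ζ ∈ X, e^{λ(ζ)} is an eigenvalue of B(ζ) and e^{λ(ζ)} ≠ e^{-λ(ζ)}. Then there exists a continuous map F : X → sl(2,ℂ) (trace-zero 2×2 complex matrices) such that B(ζ) = exp(F(ζ)) for all ζ, and λ(ζ) is an eigenvalue of F(ζ) for all ζ. -/
/-!
Since `det B = 1` and `e^λ` is an eigenvalue, `tr B = e^λ + e^{-λ} = 2 cosh λ`, and `e^λ ≠ e^{-λ}`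
says `sinh λ ≠ 0`. Put `F = (λ / sinh λ) (B - cosh λ · I)`. Then `F` is traceless with
`det F = -λ²`, so Cayley–Hamilton gives `F² = λ² I`, and summing the even and odd parts of the
exponential series gives `exp F = cosh λ · I + (sinh λ / λ) F = B`. The formula for `F` is
continuous in `ζ` because `sinh λ` never vanishes.
-/

open Matrix

theorem NormedSpace.exp_eq_cosh_smul_one_add_of_mul_self_eq {A : Type*} [Ring A] [Algebra ℂ A]
    [TopologicalSpace A] [IsTopologicalRing A] [ContinuousSMul ℂ A] [T2Space A]
    {x : A} {μ : ℂ} (hμ : μ ≠ 0) (hx : x * x = μ ^ 2 • 1) :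
    NormedSpace.exp x = Complex.cosh μ • 1 + (Complex.sinh μ / μ) • x := by
  have hx_even (k : ℕ) : x ^ (2 * k) = μ ^ (2 * k) • 1 := by
    rw [pow_mul, sq, hx, smul_pow, one_pow, pow_mul]
  rw [NormedSpace.exp_eq_tsum ℂ]
  refine HasSum.tsum_eq (HasSum.even_add_odd ?_ ?_)
  · convert (Complex.hasSum_cosh μ).smul_const (1 : A) using 2 with k
    rw [hx_even, smul_smul, div_eq_inv_mul]
  · convert ((Complex.hasSum_sinh μ).div_const μ).smul_const x using 2 with k
    rw [pow_succ, hx_even, smul_mul_assoc, one_mul, smul_smul, pow_succ, div_div,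
      mul_div_mul_right _ _ hμ, div_eq_inv_mul]

theorem Matrix.det_smul_one_sub_fin_two {R : Type*} [CommRing R] (M : Matrix (Fin 2) (Fin 2) R)
    (μ : R) : (μ • 1 - M).det = μ ^ 2 - M.trace * μ + M.det := by
  simp only [det_fin_two, trace_fin_two, sub_apply, smul_apply, smul_eq_mul, one_apply_eq,
    one_apply_ne zero_ne_one, one_apply_ne one_ne_zero]
  ring

theorem Matrix.mul_self_fin_two {R : Type*} [CommRing R] (M : Matrix (Fin 2) (Fin 2) R) :
    M * M = M.trace • M - M.det • 1 := by
  ext i j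
  fin_cases i <;> fin_cases j <;>
    simp [mul_apply, trace_fin_two, det_fin_two] <;> ring

theorem Matrix.trace_eq_two_mul_cosh {M : Matrix (Fin 2) (Fin 2) ℂ} {μ : ℂ} (hdet : M.det = 1)
    (heig : (Complex.exp μ • 1 - M).det = 0) : M.trace = 2 * Complex.cosh μ := by
  rw [det_smul_one_sub_fin_two, hdet] at heig
  have hinv : Complex.exp μ * Complex.exp (-μ) = 1 := by
    rw [← Complex.exp_add, add_neg_cancel, Complex.exp_zero]
  refine mul_left_cancel₀ (Complex.exp_ne_zero μ) ?_
  rw [Complex.two_cosh]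
  linear_combination -heig - hinv

noncomputable def sl2Log (μ : ℂ) (M : Matrix (Fin 2) (Fin 2) ℂ) : Matrix (Fin 2) (Fin 2) ℂ :=
  (μ / Complex.sinh μ) • (M - Complex.cosh μ • 1)

section sl2Log

variable {M : Matrix (Fin 2) (Fin 2) ℂ} {μ : ℂ}

theorem trace_sl2Log (htr : M.trace = 2 * Complex.cosh μ) : (sl2Log μ M).trace = 0 := by
  rw [sl2Log, trace_smul, trace_sub, trace_smul, trace_one, htr, Fintype.card_fin]
  simp only [smul_eq_mul, Nat.cast_ofNat, mul_comm, sub_self, mul_zero]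

theorem det_sl2Log (hdet : M.det = 1) (htr : M.trace = 2 * Complex.cosh μ)
    (hs : Complex.sinh μ ≠ 0) : (sl2Log μ M).det = -μ ^ 2 := by
  have h : (M - Complex.cosh μ • 1).det = -Complex.sinh μ ^ 2 := by
    rw [← neg_sub, det_neg, det_smul_one_sub_fin_two, hdet, htr, Complex.sinh_sq,
      Fintype.card_fin]
    ring
  rw [sl2Log, det_smul, h, Fintype.card_fin, div_pow]
  field_simp

theorem sl2Log_mul_self (hdet : M.det = 1) (htr : M.trace = 2 * Complex.cosh μ)
    (hs : Complex.sinh μ ≠ 0) : sl2Log μ M * sl2Log μ M = μ ^ 2 • 1 := by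
  rw [mul_self_fin_two, trace_sl2Log htr, det_sl2Log hdet htr hs, zero_smul, zero_sub, neg_smul,
    neg_neg]

theorem exp_sl2Log (hdet : M.det = 1) (htr : M.trace = 2 * Complex.cosh μ)
    (hs : Complex.sinh μ ≠ 0) (hμ : μ ≠ 0) : NormedSpace.exp (sl2Log μ M) = M := by
  rw [NormedSpace.exp_eq_cosh_smul_one_add_of_mul_self_eq hμ (sl2Log_mul_self hdet htr hs),
    sl2Log, smul_smul, div_mul_div_cancel₀ hμ, div_self hs, one_smul, add_sub_cancel]

theorem det_smul_one_sub_sl2Log (hdet : M.det = 1) (htr : M.trace = 2 * Complex.cosh μ)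
    (hs : Complex.sinh μ ≠ 0) : (μ • 1 - sl2Log μ M).det = 0 := by
  rw [det_smul_one_sub_fin_two, trace_sl2Log htr, det_sl2Log hdet htr hs]
  ring

end sl2Log

theorem stmt_0 {X : Type*} [TopologicalSpace X]
    (B : X → Matrix (Fin 2) (Fin 2) ℂ) (hBc : Continuous B)
    (hBdet : ∀ ζ, (B ζ).det = 1)
    (lam : X → ℂ) (hlamc : Continuous lam)
    (heig : ∀ ζ, (Complex.exp (lam ζ) • (1 : Matrix (Fin 2) (Fin 2) ℂ) - B ζ).det = 0)
    (hne : ∀ ζ, Complex.exp (lam ζ) ≠ Complex.exp (-lam ζ)) :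
    ∃ F : X → Matrix (Fin 2) (Fin 2) ℂ, Continuous F ∧
      (∀ ζ, (F ζ).trace = 0) ∧
      (∀ ζ, NormedSpace.exp (F ζ) = B ζ) ∧
      (∀ ζ, (lam ζ • (1 : Matrix (Fin 2) (Fin 2) ℂ) - F ζ).det = 0) := by
  have hs (ζ : X) : Complex.sinh (lam ζ) ≠ 0 := fun h =>
    hne ζ (sub_eq_zero.1 (by rw [← Complex.two_sinh, h, mul_zero]))
  have hlam (ζ : X) : lam ζ ≠ 0 := fun h => hs ζ (by rw [h, Complex.sinh_zero])
  have htr (ζ : X) := trace_eq_two_mul_cosh (hBdet ζ) (heig ζ)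
  refine ⟨fun ζ => sl2Log (lam ζ) (B ζ), ?_, fun ζ => trace_sl2Log (htr ζ),
    fun ζ => exp_sl2Log (hBdet ζ) (htr ζ) (hs ζ) (hlam ζ),
    fun ζ => det_smul_one_sub_sl2Log (hBdet ζ) (htr ζ) (hs ζ)⟩
  unfold sl2Log
  fun_prop (disch := exact hs)
end

section
/- Let B ∈ SL(2,ℂ), λ ∈ ℂ, and suppose e^λ is an eigenvalue of B with e^λ ≠ e^{-λ}. Then there exists a unique matrix F ∈ sl(2,ℂ) such that exp(F) = B and λ is an eigenvalue of F. -/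
open Matrix

/-! A trace-zero `2 × 2` matrix `F` with eigenvalue `λ` satisfies `F² = λ²` (Cayley–Hamilton), so the
exponential series collapses to `exp F = cosh λ + (sinh λ / λ) F`. Since `det B = 1` and `e^λ` is an
eigenvalue of `B`, `tr B = e^λ + e^{-λ} = 2 cosh λ`, and the hypothesis says `sinh λ ≠ 0`. Hence
`exp F = B` forces `F = (λ / sinh λ)(B - cosh λ)`, and this `F` has trace `0` and determinant `-λ²`. -/

theorem NormedSpace.exp_eq_cosh_add_sinh_div_smul_of_sq_eq {A : Type*} [Ring A] [Algebra ℂ A]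
    [TopologicalSpace A] [IsTopologicalRing A] [ContinuousSMul ℂ A] [T2Space A]
    {x : A} {lam : ℂ} (hlam : lam ≠ 0) (hx : x ^ 2 = lam ^ 2 • (1 : A)) :
    NormedSpace.exp x = Complex.cosh lam • (1 : A) + (Complex.sinh lam / lam) • x := by
  have hpow_even (n : ℕ) : x ^ (2 * n) = lam ^ (2 * n) • (1 : A) := by
    rw [pow_mul, hx, smul_pow, one_pow, ← pow_mul]
  have hpow_odd (n : ℕ) : x ^ (2 * n + 1) = lam ^ (2 * n + 1) • (lam⁻¹ • x) := by
    rw [pow_succ, hpow_even, smul_one_mul, smul_smul, pow_succ, mul_assoc,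
      mul_inv_cancel₀ hlam, mul_one]
  rw [NormedSpace.exp_eq_tsum ℂ, div_eq_mul_inv, ← smul_smul]
  refine HasSum.tsum_eq (HasSum.even_add_odd ?_ ?_)
  · convert (Complex.hasSum_cosh lam).smul_const (1 : A) using 2 with n
    rw [hpow_even, smul_smul, div_eq_inv_mul]
  · convert (Complex.hasSum_sinh lam).smul_const (lam⁻¹ • x) using 2 with n
    rw [hpow_odd, smul_smul, div_eq_inv_mul]

namespace Matrix

section CommRing

variable {R : Type*} [CommRing R]

theorem det_fin_two_smul_one_sub (a : R) (M : Matrix (Fin 2) (Fin 2) R) :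
    (a • (1 : Matrix (Fin 2) (Fin 2) R) - M).det = a ^ 2 - a * M.trace + M.det := by
  rw [det_fin_two, det_fin_two, trace_fin_two]
  simp only [sub_apply, smul_apply, smul_eq_mul, one_apply_eq, one_apply_ne zero_ne_one,
    one_apply_ne one_ne_zero, mul_one, mul_zero]
  ring

theorem det_fin_two_sub_smul_one (M : Matrix (Fin 2) (Fin 2) R) (a : R) :
    (M - a • (1 : Matrix (Fin 2) (Fin 2) R)).det = a ^ 2 - a * M.trace + M.det := by
  rw [det_fin_two, det_fin_two, trace_fin_two]
  simp only [sub_apply, smul_apply, smul_eq_mul, one_apply_eq, one_apply_ne zero_ne_one,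
    one_apply_ne one_ne_zero, mul_one, mul_zero]
  ring

theorem fin_two_sq_eq_neg_det_smul_one {M : Matrix (Fin 2) (Fin 2) R}
    (hM : M.trace = 0) : M ^ 2 = -M.det • (1 : Matrix (Fin 2) (Fin 2) R) := by
  rw [trace_fin_two] at hM
  ext i j
  fin_cases i <;> fin_cases j <;>
    simp only [Fin.zero_eta, Fin.mk_one, sq, mul_apply, Fin.sum_univ_two, det_fin_two, smul_apply,
      smul_eq_mul, one_apply_eq, one_apply_ne zero_ne_one, one_apply_ne one_ne_zero, mul_one, mul_zero]
  · linear_combination M 0 0 * hM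
  · linear_combination M 0 1 * hM
  · linear_combination M 1 0 * hM
  · linear_combination M 1 1 * hM

theorem det_fin_two_smul_one_sub_eq_zero_iff {M : Matrix (Fin 2) (Fin 2) R}
    (hM : M.trace = 0) (a : R) :
    (a • (1 : Matrix (Fin 2) (Fin 2) R) - M).det = 0 ↔ M.det = -a ^ 2 := by
  rw [det_fin_two_smul_one_sub, hM, mul_zero, sub_zero, add_comm, add_eq_zero_iff_eq_neg]

end CommRing

theorem trace_fin_two_eq_add_inv_of_det_eq_one {K : Type*} [Field K]
    {M : Matrix (Fin 2) (Fin 2) K} (hdet : M.det = 1) {μ : K} (hμ : μ ≠ 0)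
    (heig : (μ • (1 : Matrix (Fin 2) (Fin 2) K) - M).det = 0) :
    M.trace = μ + μ⁻¹ := by
  rw [det_fin_two_smul_one_sub, hdet] at heig
  field_simp
  linear_combination -heig

end Matrix

theorem stmt_1 (B : Matrix (Fin 2) (Fin 2) ℂ) (hBdet : B.det = 1) (lam : ℂ)
    (heig : (Complex.exp lam • (1 : Matrix (Fin 2) (Fin 2) ℂ) - B).det = 0)
    (hne : Complex.exp lam ≠ Complex.exp (-lam)) :
    ∃! F : Matrix (Fin 2) (Fin 2) ℂ,
      F.trace = 0 ∧ NormedSpace.exp F = B ∧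
      (lam • (1 : Matrix (Fin 2) (Fin 2) ℂ) - F).det = 0 := by
  set c := Complex.cosh lam
  set s := Complex.sinh lam
  have hs : s ≠ 0 := by
    rw [← mul_ne_zero_iff_left two_ne_zero, Complex.two_sinh]
    exact sub_ne_zero.2 hne
  have hlam : lam ≠ 0 := by
    rintro rfl
    exact hs Complex.sinh_zero
  have htrB : B.trace = 2 * c := by
    rw [trace_fin_two_eq_add_inv_of_det_eq_one hBdet (Complex.exp_ne_zero lam) heig,
      ← Complex.exp_neg, Complex.two_cosh]
  have hexp {F : Matrix (Fin 2) (Fin 2) ℂ} (htr : F.trace = 0)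
      (hF : (lam • (1 : Matrix (Fin 2) (Fin 2) ℂ) - F).det = 0) :
      NormedSpace.exp F = c • 1 + (s / lam) • F := by
    refine NormedSpace.exp_eq_cosh_add_sinh_div_smul_of_sq_eq hlam ?_
    rw [fin_two_sq_eq_neg_det_smul_one htr,
      (det_fin_two_smul_one_sub_eq_zero_iff htr lam).1 hF, neg_neg]
  have hscalar : s / lam * (lam / s) = 1 := by field_simp
  have hFtr : ((lam / s) • (B - c • 1)).trace = 0 := by
    rw [trace_smul, trace_sub, trace_smul, trace_one, htrB, Fintype.card_fin, smul_eq_mul,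
      smul_eq_mul, Nat.cast_ofNat, mul_comm c, sub_self, mul_zero]
  have hFeig : (lam • (1 : Matrix (Fin 2) (Fin 2) ℂ) - (lam / s) • (B - c • 1)).det = 0 := by
    rw [det_fin_two_smul_one_sub_eq_zero_iff hFtr, det_smul, det_fin_two_sub_smul_one,
      htrB, hBdet, Fintype.card_fin]
    have hcs : c ^ 2 - c * (2 * c) + 1 = -s ^ 2 := by linear_combination -Complex.cosh_sq lam
    rw [hcs, div_pow, mul_neg, div_mul_cancel₀ _ (pow_ne_zero 2 hs)]
  refine ⟨(lam / s) • (B - c • 1), ⟨hFtr, ?_, hFeig⟩, ?_⟩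
  · rw [hexp hFtr hFeig, smul_smul, hscalar, one_smul, add_sub_cancel]
  · rintro G ⟨htr, hexpG, hG⟩
    rw [← hexpG, hexp htr hG, add_sub_cancel_left, smul_smul, mul_comm, hscalar, one_smul]
end

section
/- If B ∈ SL(2,ℂ) and λ ∈ ℂ satisfy e^λ eigenvalue of B, e^λ ≠ e^{-λ}, and P = (e^λ − e^{-λ})^{-1}(B − e^{-λ} I), then F := λP − λ(I − P) satisfies exp(F) = B, tr F = 0, and the eigenvalues of F are λ and −λ. -/
/-! The other eigenvalue of `B` is `e^{-λ} = (e^λ)⁻¹` because `det B = 1`; the two eigenvalues are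
distinct, so by Cayley–Hamilton `(B - e^λ)(B - e^{-λ}) = 0`, which makes `P` an idempotent of
trace `1` with `B = e^λ P + e^{-λ} (1 - P)`. Since `(x, y) ↦ x P + y (1 - P)` is a continuous ring
homomorphism `ℂ × ℂ → M₂(ℂ)`, it commutes with `exp`, and `F = λ P + (-λ) (1 - P)` gives
`exp F = B`. Finally `λ - F = 2λ (1 - P)` and `-λ - F = -2λ P` are multiples of idempotents of
trace `1`, hence singular. -/

namespace IsIdempotentElem

variable {R 𝔸 : Type*} [CommSemiring R] [Ring 𝔸] [Algebra R 𝔸] {p : 𝔸}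

def prodRingHom (hp : IsIdempotentElem p) : R × R →+* 𝔸 where
  toFun z := z.1 • p + z.2 • (1 - p)
  map_one' := by simp
  map_mul' z w := by
    have hq : IsIdempotentElem (1 - p) := hp.one_sub
    have hpq : p * (1 - p) = 0 := by rw [mul_sub, mul_one, hp.eq, sub_self]
    have hqp : (1 - p) * p = 0 := by rw [sub_mul, one_mul, hp.eq, sub_self]
    simp only [Prod.fst_mul, Prod.snd_mul, add_mul, mul_add, smul_mul_smul_comm, hp.eq, hq.eq,
      hpq, hqp, smul_zero, add_zero, zero_add]
  map_zero' := by simp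
  map_add' z w := by simp only [Prod.fst_add, Prod.snd_add, add_smul]; abel

theorem prodRingHom_apply (hp : IsIdempotentElem p) (z : R × R) :
    hp.prodRingHom z = z.1 • p + z.2 • (1 - p) := rfl

end IsIdempotentElem

theorem NormedSpace.exp_smul_add_smul_one_sub {𝕂 𝔸 : Type*} [RCLike 𝕂] [NormedRing 𝔸]
    [NormedAlgebra 𝕂 𝔸] [CompleteSpace 𝔸] {p : 𝔸} (hp : IsIdempotentElem p) (a b : 𝕂) :
    exp (a • p + b • (1 - p)) = exp a • p + exp b • (1 - p) := by
  have hcont : Continuous (hp.prodRingHom : 𝕂 × 𝕂 →+* 𝔸) := by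
    simp only [IsIdempotentElem.prodRingHom, RingHom.coe_mk, MonoidHom.coe_mk, OneHom.coe_mk]
    fun_prop
  have hmap := map_exp_of_mem_ball hp.prodRingHom hcont (a, b)
    ((expSeries_radius_eq_top 𝕂 (𝕂 × 𝕂)).symm ▸ edist_lt_top _ _)
  simpa [IsIdempotentElem.prodRingHom_apply] using hmap.symm

namespace Matrix

theorem exp_smul_add_smul_one_sub {𝕂 m : Type*} [RCLike 𝕂] [Fintype m] [DecidableEq m]
    {P : Matrix m m 𝕂} (hP : IsIdempotentElem P) (a b : 𝕂) :
    NormedSpace.exp (a • P + b • (1 - P)) = NormedSpace.exp a • P + NormedSpace.exp b • (1 - P) :=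
  -- `exp` only sees the topology, so any Banach-algebra norm on matrices will do.
  open scoped Norms.Operator in NormedSpace.exp_smul_add_smul_one_sub hP a b

section CommRing

variable {R : Type*} [CommRing R] (A : Matrix (Fin 2) (Fin 2) R)

theorem mul_self_fin_two_s3 : A * A = A.trace • A - A.det • 1 := by
  ext i j
  fin_cases i <;> fin_cases j <;>
    simp [mul_apply, trace_fin_two, det_fin_two] <;> ring

theorem det_smul_one_sub_fin_two_s3 (μ : R) :
    (μ • (1 : Matrix (Fin 2) (Fin 2) R) - A).det = μ ^ 2 - μ * A.trace + A.det := by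
  simp [det_fin_two, trace_fin_two]
  ring

variable {A}

theorem det_eq_zero_of_isIdempotentElem_of_trace_eq_one [Nontrivial R] (hA : IsIdempotentElem A)
    (htr : A.trace = 1) : A.det = 0 := by
  have h : A.det • (1 : Matrix (Fin 2) (Fin 2) R) = 0 := by
    have hCH := A.mul_self_fin_two_s3
    rw [hA.eq, htr, one_smul] at hCH
    exact sub_eq_self.mp hCH.symm
  simpa using congr_fun₂ h 0 0

theorem trace_one_sub_eq_one_of_trace_eq_one [Nontrivial R] (htr : A.trace = 1) :
    (1 - A).trace = 1 := by
  rw [trace_sub, trace_one, htr, Fintype.card_fin]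
  norm_num

end CommRing

section Field

variable {K : Type*} [Field K] {A : Matrix (Fin 2) (Fin 2) K}

theorem det_inv_smul_one_sub_of_det_eq_one (hA : A.det = 1) {μ : K} (hμ : μ ≠ 0) :
    (μ⁻¹ • (1 : Matrix (Fin 2) (Fin 2) K) - A).det = μ⁻¹ ^ 2 * (μ • 1 - A).det := by
  rw [det_smul_one_sub_fin_two_s3, det_smul_one_sub_fin_two_s3, hA]
  field_simp
  ring

def spectralProjection (A : Matrix (Fin 2) (Fin 2) K) (e f : K) : Matrix (Fin 2) (Fin 2) K :=
  (e - f)⁻¹ • (A - f • 1)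

variable {e f : K} (hef : e ≠ f)
include hef

theorem smul_add_smul_one_sub_spectralProjection :
    e • A.spectralProjection e f + f • (1 - A.spectralProjection e f) = A := by
  have hP : (e - f) • A.spectralProjection e f = A - f • 1 := by
    rw [spectralProjection, smul_smul, mul_inv_cancel₀ (sub_ne_zero.mpr hef), one_smul]
  calc e • A.spectralProjection e f + f • (1 - A.spectralProjection e f)
      = (e - f) • A.spectralProjection e f + f • 1 := by module
    _ = A := by rw [hP]; abel

variable (he : (e • 1 - A).det = 0) (hf : (f • 1 - A).det = 0)
include he hf

theorem trace_eq_add_of_det_smul_one_sub_eq_zero : A.trace = e + f := by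
  rw [det_smul_one_sub_fin_two_s3] at he hf
  have : (e - f) * A.trace = (e - f) * (e + f) := by linear_combination hf - he
  exact mul_left_cancel₀ (sub_ne_zero.mpr hef) this

theorem det_eq_mul_of_det_smul_one_sub_eq_zero : A.det = e * f := by
  have htr := trace_eq_add_of_det_smul_one_sub_eq_zero hef he hf
  rw [det_smul_one_sub_fin_two_s3, htr] at he
  linear_combination he

theorem sub_smul_one_mul_sub_smul_one_eq_zero : (A - e • 1) * (A - f • 1) = 0 := by
  have hA := A.mul_self_fin_two_s3
  rw [trace_eq_add_of_det_smul_one_sub_eq_zero hef he hf,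
    det_eq_mul_of_det_smul_one_sub_eq_zero hef he hf] at hA
  simp only [sub_mul, mul_sub, smul_mul_assoc, mul_smul_comm, one_mul, mul_one, hA]
  module

theorem isIdempotentElem_spectralProjection : IsIdempotentElem (A.spectralProjection e f) := by
  have h : (A - f • 1) * (A - f • 1) = (e - f) • (A - f • 1) := by
    nth_rewrite 1 [show A - f • 1 = (A - e • 1) + (e - f) • 1 by module]
    rw [add_mul, sub_smul_one_mul_sub_smul_one_eq_zero hef he hf, zero_add, smul_mul_assoc,
      one_mul]
  rw [IsIdempotentElem, spectralProjection, smul_mul_smul_comm, h, smul_smul]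
  congr 1
  field_simp [sub_ne_zero.mpr hef]

theorem trace_spectralProjection : (A.spectralProjection e f).trace = 1 := by
  rw [spectralProjection, trace_smul, trace_sub, trace_smul, trace_one,
    trace_eq_add_of_det_smul_one_sub_eq_zero hef he hf]
  simp only [Fintype.card_fin, Nat.cast_ofNat, smul_eq_mul]
  field_simp [sub_ne_zero.mpr hef]
  ring

end Field

end Matrix

open Matrix

theorem stmt_3 (B : Matrix (Fin 2) (Fin 2) ℂ) (hBdet : B.det = 1) (lam : ℂ)
    (heig : (Complex.exp lam • (1 : Matrix (Fin 2) (Fin 2) ℂ) - B).det = 0)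
    (hne : Complex.exp lam ≠ Complex.exp (-lam))
    (P F : Matrix (Fin 2) (Fin 2) ℂ)
    (hP : P = (Complex.exp lam - Complex.exp (-lam))⁻¹ •
        (B - Complex.exp (-lam) • (1 : Matrix (Fin 2) (Fin 2) ℂ)))
    (hF : F = lam • P - lam • ((1 : Matrix (Fin 2) (Fin 2) ℂ) - P)) :
    NormedSpace.exp F = B ∧ F.trace = 0 ∧
    (lam • (1 : Matrix (Fin 2) (Fin 2) ℂ) - F).det = 0 ∧
    ((-lam) • (1 : Matrix (Fin 2) (Fin 2) ℂ) - F).det = 0 := by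
  have heig' : (Complex.exp (-lam) • (1 : Matrix (Fin 2) (Fin 2) ℂ) - B).det = 0 := by
    rw [Complex.exp_neg, det_inv_smul_one_sub_of_det_eq_one hBdet (Complex.exp_ne_zero lam), heig,
      mul_zero]
  replace hP : P = B.spectralProjection (Complex.exp lam) (Complex.exp (-lam)) := hP
  have hPidem : IsIdempotentElem P := hP ▸ isIdempotentElem_spectralProjection hne heig heig'
  have hPtr : P.trace = 1 := hP ▸ trace_spectralProjection hne heig heig'
  refine ⟨?_, ?_, ?_, ?_⟩
  · rw [show F = lam • P + (-lam) • (1 - P) by rw [hF]; module, exp_smul_add_smul_one_sub hPidem,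
      ← Complex.exp_eq_exp_ℂ, hP, smul_add_smul_one_sub_spectralProjection hne]
  · rw [hF, trace_sub, trace_smul, trace_smul, hPtr, trace_one_sub_eq_one_of_trace_eq_one hPtr,
      sub_self]
  · rw [show lam • 1 - F = (2 * lam) • (1 - P) by rw [hF]; module, det_smul,
      det_eq_zero_of_isIdempotentElem_of_trace_eq_one hPidem.one_sub
        (trace_one_sub_eq_one_of_trace_eq_one hPtr), mul_zero]
  · rw [show -lam • 1 - F = (-2 * lam) • P by rw [hF]; module, det_smul,
      det_eq_zero_of_isIdempotentElem_of_trace_eq_one hPidem hPtr, mul_zero]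
end

section
/- Let f : 𝔻̄ → ℂ be continuous on the closed unit disk, holomorphic on the open unit disk, and vanish identically on an open arc of the unit circle. Then f vanishes identically on 𝔻̄. -/
open Metric Set Filter Topology

/-!
Finitely many rotations `z ↦ c * z` carry every point of the circle into the arc, so the product
`g z = ∏ c, f (c * z)` vanishes on the whole circle, hence on the disc by the maximum modulus
principle. A product of analytic functions vanishing on a connected open set has a factor
vanishing there, so some rotation of `f`, and hence `f` itself, vanishes on the open disc;
continuity extends this to the closed disc.
-/

theorem Finset.exists_eqOn_zero_of_frequently_prod_eq_zero {ι 𝕜 A : Type*}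
    [NontriviallyNormedField 𝕜] [NormedCommRing A] [NormedSpace 𝕜 A] [NoZeroDivisors A]
    [Nontrivial A] {t : Finset ι} {F : ι → 𝕜 → A} {U : Set 𝕜} {z₀ : 𝕜}
    (hF : ∀ c ∈ t, AnalyticOnNhd 𝕜 (F c) U) (hU : IsPreconnected U) (h₀ : z₀ ∈ U)
    (hprod : ∃ᶠ z in 𝓝[≠] z₀, ∏ c ∈ t, F c z = 0) :
    ∃ c ∈ t, EqOn (F c) 0 U := by
  simp only [Finset.prod_eq_zero_iff, Finset.frequently_exists] at hprod
  obtain ⟨c, hc, hfreq⟩ := hprod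
  exact ⟨c, hc, (hF c hc).eqOn_zero_of_preconnected_of_frequently_eq_zero hU h₀ hfreq⟩

theorem DiffContOnCl.finsetProd {ι 𝕜 A : Type*} [NontriviallyNormedField 𝕜]
    [NormedCommRing A] [NormedAlgebra 𝕜 A] {t : Finset ι} {F : ι → 𝕜 → A} {s : Set 𝕜}
    (hF : ∀ c ∈ t, DiffContOnCl 𝕜 (F c) s) :
    DiffContOnCl 𝕜 (fun z => ∏ c ∈ t, F c z) s :=
  ⟨DifferentiableOn.fun_finsetProd fun c hc => (hF c hc).1,
    continuousOn_finsetProd t fun c hc => (hF c hc).2⟩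

theorem mapsTo_mul_left_ball_zero {𝕜 : Type*} [NormedDivisionRing 𝕜] {c : 𝕜} (hc : ‖c‖ ≤ 1)
    (r : ℝ) : MapsTo (c * ·) (ball 0 r) (ball 0 r) := fun z hz => by
  rw [mem_ball_zero_iff] at hz ⊢
  calc ‖c * z‖ = ‖c‖ * ‖z‖ := norm_mul c z
    _ ≤ ‖z‖ := mul_le_of_le_one_left (norm_nonneg z) hc
    _ < r := hz

theorem IsOpen.exists_finite_rotations_cover_sphere {U : Set ℂ} (hU : IsOpen U)
    (hne : (U ∩ sphere (0 : ℂ) 1).Nonempty) :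
    ∃ t : Finset ℂ, (∀ c ∈ t, ‖c‖ = 1) ∧
      ∀ w ∈ sphere (0 : ℂ) 1, ∃ c ∈ t, c * w ∈ U ∩ sphere 0 1 := by
  obtain ⟨u, huU, hu⟩ := hne
  rw [mem_sphere_zero_iff_norm] at hu
  have hcover : sphere (0 : ℂ) 1 ⊆ ⋃ c ∈ sphere (0 : ℂ) 1, (c * ·) ⁻¹' U := by
    intro w hw
    rw [mem_sphere_zero_iff_norm] at hw
    have hw0 : w ≠ 0 := norm_ne_zero_iff.mp (by rw [hw]; exact one_ne_zero)
    refine mem_biUnion (x := u / w) (by simp [hu, hw]) ?_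
    simp [div_mul_cancel₀ u hw0, huU]
  obtain ⟨s, hs, hfin, hs_cover⟩ := (isCompact_sphere (0 : ℂ) 1).elim_finite_subcover_image
    (fun c _ => hU.preimage (continuous_const_mul c)) hcover
  have hs_norm : ∀ c ∈ s, ‖c‖ = 1 := fun c hc => mem_sphere_zero_iff_norm.mp (hs hc)
  refine ⟨hfin.toFinset, fun c hc => hs_norm c (hfin.mem_toFinset.mp hc), fun w hw => ?_⟩
  obtain ⟨c, hc, hcw⟩ := mem_iUnion₂.mp (hs_cover hw)
  refine ⟨c, hfin.mem_toFinset.mpr hc, hcw, ?_⟩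
  rw [mem_sphere_zero_iff_norm] at hw ⊢
  rw [norm_mul, hs_norm c hc, hw, one_mul]

theorem stmt_8 (f : ℂ → ℂ)
    (hc : ContinuousOn f (closedBall (0 : ℂ) 1))
    (hd : DifferentiableOn ℂ f (ball (0 : ℂ) 1))
    (U : Set ℂ) (hU : IsOpen U)
    (hne : (U ∩ sphere (0 : ℂ) 1).Nonempty)
    (hz : ∀ z ∈ U ∩ sphere (0 : ℂ) 1, f z = 0) :
    ∀ z ∈ closedBall (0 : ℂ) 1, f z = 0 := by
  obtain ⟨t, ht_norm, ht_cover⟩ := hU.exists_finite_rotations_cover_sphere hne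
  have hf : DiffContOnCl ℂ f (ball 0 1) := ⟨hd, by rwa [closure_ball _ one_ne_zero]⟩
  have hrot : ∀ c ∈ t, DiffContOnCl ℂ (fun z => f (c * z)) (ball 0 1) := fun c hc =>
    hf.comp (differentiable_id.const_mul c).diffContOnCl
      (mapsTo_mul_left_ball_zero (ht_norm c hc).le 1)
  have hprod : EqOn (fun z => ∏ c ∈ t, f (c * z)) 0 (ball 0 1) := by
    refine Complex.eqOn_of_eqOn_frontier isBounded_ball (DiffContOnCl.finsetProd hrot)
      diffContOnCl_const fun w hw => ?_
    rw [frontier_ball _ one_ne_zero] at hw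
    obtain ⟨c, hct, hcw⟩ := ht_cover w hw
    exact Finset.prod_eq_zero hct (hz _ hcw)
  obtain ⟨c, hct, hc0⟩ := Finset.exists_eqOn_zero_of_frequently_prod_eq_zero
    (fun c hc => (hrot c hc).differentiableOn.analyticOnNhd isOpen_ball)
    (convex_ball 0 1).isPreconnected (mem_ball_self one_pos)
    (eventually_nhdsWithin_of_eventually_nhds
      (eventually_of_mem (ball_mem_nhds 0 one_pos) hprod)).frequently
  have hc_ne : c ≠ 0 := norm_ne_zero_iff.mp (by rw [ht_norm c hct]; exact one_ne_zero)
  have hf_ball : EqOn f 0 (ball 0 1) := fun w hw => by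
    simpa [mul_inv_cancel_left₀ hc_ne] using
      hc0 (mapsTo_mul_left_ball_zero (c := c⁻¹) (by simp [ht_norm c hct]) 1 hw)
  exact hf_ball.of_subset_closure hc continuousOn_const ball_subset_closedBall
    (closure_ball _ one_ne_zero).ge
end

section
/- Let a be continuous on the closed unit disk 𝔻̄, holomorphic on the open unit disk, and not identically zero. Then the set {ζ ∈ ∂𝔻 : a(ζ) = 0} is nowhere dense in the unit circle ∂𝔻. -/
/-!
If `a` vanished on an arc of the circle, then finitely many rotations of that arc cover the
circle, so the product `f z = ∏ c, a (c * z)` over these rotations vanishes on the whole circle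
and hence, by the maximum modulus principle, on the disk. Holomorphic functions on the
(connected) disk form an integral domain, so one factor `a (c * ·)`, and thus `a`, vanishes
on the disk, and by continuity on the closed disk.
-/

open Metric Set

theorem AnalyticOnNhd.exists_eqOn_zero_of_prod_eq_zero {𝕜 A ι : Type*}
    [NontriviallyNormedField 𝕜] [NormedCommRing A] [IsDomain A] [NormedAlgebra 𝕜 A]
    {U : Set 𝕜} {f : ι → 𝕜 → A} (s : Finset ι) (hf : ∀ i ∈ s, AnalyticOnNhd 𝕜 (f i) U)
    (hU : IsPreconnected U) (hUne : U.Nonempty) (h : ∀ z ∈ U, ∏ i ∈ s, f i z = 0) :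
    ∃ i ∈ s, ∀ z ∈ U, f i z = 0 := by
  classical
  induction s using Finset.induction_on with
  | empty =>
    obtain ⟨z, hz⟩ := hUne
    exact absurd (h z hz) (by simp)
  | insert j s hj ih =>
    simp only [Finset.prod_insert hj] at h
    rcases (hf j (s.mem_insert_self j)).eq_zero_or_eq_zero_of_mul_eq_zero
        (Finset.analyticOnNhd_fun_prod s fun i hi => hf i (Finset.mem_insert_of_mem hi)) h hU
      with hj0 | hs0
    · exact ⟨j, s.mem_insert_self j, hj0⟩
    · obtain ⟨i, hi, hi0⟩ := ih (fun i hi => hf i (Finset.mem_insert_of_mem hi)) hs0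
      exact ⟨i, Finset.mem_insert_of_mem hi, hi0⟩

section UnitMul

variable {𝕜 : Type*} [NormedDivisionRing 𝕜] {c : 𝕜}

theorem mapsTo_mul_ball_zero (hc : ‖c‖ = 1) (r : ℝ) :
    MapsTo (c * ·) (ball (0 : 𝕜) r) (ball 0 r) := fun z hz => by
  simpa [norm_mul, hc] using hz

theorem mapsTo_mul_closedBall_zero (hc : ‖c‖ = 1) (r : ℝ) :
    MapsTo (c * ·) (closedBall (0 : 𝕜) r) (closedBall 0 r) := fun z hz => by
  simpa [norm_mul, hc] using hz

theorem mapsTo_mul_sphere_zero (hc : ‖c‖ = 1) (r : ℝ) :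
    MapsTo (c * ·) (sphere (0 : 𝕜) r) (sphere 0 r) := fun z hz => by
  simpa [norm_mul, hc] using hz

end UnitMul

theorem exists_finset_unit_mul_mem_ball {𝕜 : Type*} [NormedDivisionRing 𝕜] [ProperSpace 𝕜]
    {z₀ : 𝕜} (hz₀ : ‖z₀‖ = 1) {ε : ℝ} (hε : 0 < ε) :
    ∃ C : Finset 𝕜, (∀ c ∈ C, ‖c‖ = 1) ∧ ∀ z ∈ sphere (0 : 𝕜) 1, ∃ c ∈ C, c * z ∈ ball z₀ ε := by
  classical
  obtain ⟨t, hts, htfin, hcover⟩ := finite_cover_balls_of_compact (isCompact_sphere (0 : 𝕜) 1) hε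
  have hnorm : ∀ w ∈ t, ‖w‖ = 1 := fun w hw => mem_sphere_zero_iff_norm.mp (hts hw)
  refine ⟨htfin.toFinset.image (z₀ / ·), ?_, fun z hz => ?_⟩
  · simp only [Finset.mem_image, Finite.mem_toFinset]
    rintro _ ⟨w, hw, rfl⟩
    simp [hz₀, hnorm w hw]
  · obtain ⟨w, hw, hzw⟩ := mem_iUnion₂.mp (hcover hz)
    have hw0 : w ≠ 0 := norm_ne_zero_iff.mp (by simp [hnorm w hw])
    refine ⟨z₀ / w, Finset.mem_image_of_mem _ (htfin.mem_toFinset.mpr hw), ?_⟩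
    have : z₀ / w * z - z₀ = z₀ / w * (z - w) := by rw [mul_sub, div_mul_cancel₀ z₀ hw0]
    rw [mem_ball, dist_eq_norm, this, norm_mul, norm_div, hz₀, hnorm w hw, div_one, one_mul,
      ← dist_eq_norm]
    exact hzw

theorem Complex.eqOn_zero_ball_of_eqOn_zero_sphere {E : Type*} [NormedAddCommGroup E]
    [NormedSpace ℂ E] {f : ℂ → E} {c : ℂ} {r : ℝ} (hr : r ≠ 0)
    (hc : ContinuousOn f (closedBall c r)) (hd : DifferentiableOn ℂ f (ball c r))
    (h : EqOn f 0 (sphere c r)) : EqOn f 0 (ball c r) :=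
  Complex.eqOn_of_eqOn_frontier isBounded_ball ⟨hd, by rwa [closure_ball c hr]⟩
    diffContOnCl_const (by rwa [frontier_ball c hr])

theorem eqOn_zero_closedBall_of_eqOn_zero_arc {a : ℂ → ℂ}
    (hc : ContinuousOn a (closedBall (0 : ℂ) 1)) (hd : DifferentiableOn ℂ a (ball (0 : ℂ) 1))
    {z₀ : ℂ} (hz₀ : z₀ ∈ sphere (0 : ℂ) 1) {ε : ℝ} (hε : 0 < ε)
    (harc : ∀ z ∈ sphere (0 : ℂ) 1, z ∈ ball z₀ ε → a z = 0) :
    EqOn a 0 (closedBall (0 : ℂ) 1) := by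
  obtain ⟨C, hC, hcover⟩ := exists_finset_unit_mul_mem_ball (mem_sphere_zero_iff_norm.mp hz₀) hε
  have hrot : ∀ c ∈ C, DifferentiableOn ℂ (fun z => a (c * z)) (ball 0 1) := fun c hc' =>
    hd.comp (differentiable_id.const_mul c).differentiableOn (mapsTo_mul_ball_zero (hC c hc') 1)
  have hprod : EqOn (fun z => ∏ c ∈ C, a (c * z)) 0 (ball 0 1) := by
    refine Complex.eqOn_zero_ball_of_eqOn_zero_sphere one_ne_zero ?_ ?_ fun z hz => ?_
    · exact continuousOn_finsetProd C fun c hc' =>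
        hc.comp (continuous_const_mul c).continuousOn (mapsTo_mul_closedBall_zero (hC c hc') 1)
    · exact DifferentiableOn.fun_finsetProd hrot
    · obtain ⟨c, hcC, hcz⟩ := hcover z hz
      exact Finset.prod_eq_zero hcC (harc _ (mapsTo_mul_sphere_zero (hC c hcC) 1 hz) hcz)
  obtain ⟨c, hcC, hc0⟩ := AnalyticOnNhd.exists_eqOn_zero_of_prod_eq_zero C
    (fun c hc' => (hrot c hc').analyticOnNhd isOpen_ball)
    (convex_ball (0 : ℂ) 1).isPreconnected ⟨0, mem_ball_self one_pos⟩ hprod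
  have hc_ne : c ≠ 0 := norm_ne_zero_iff.mp (by simp [hC c hcC])
  have hball : EqOn a 0 (ball 0 1) := fun z hz => by
    simpa [mul_inv_cancel_left₀ hc_ne] using
      hc0 (c⁻¹ * z) (mapsTo_mul_ball_zero (by simp [hC c hcC]) 1 hz)
  exact hball.of_subset_closure hc continuousOn_const ball_subset_closedBall
    (closure_ball (0 : ℂ) one_ne_zero).symm.subset

theorem stmt_9 (a : ℂ → ℂ)
    (hc : ContinuousOn a (closedBall (0 : ℂ) 1))
    (hd : DifferentiableOn ℂ a (ball (0 : ℂ) 1))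
    (hnz : ¬ ∀ z ∈ closedBall (0 : ℂ) 1, a z = 0) :
    IsNowhereDense {z : sphere (0 : ℂ) 1 | a z = 0} := by
  have hclosed : IsClosed {z : sphere (0 : ℂ) 1 | a z = 0} :=
    isClosed_eq (hc.mono sphere_subset_closedBall).domRestrict continuous_const
  rw [hclosed.isNowhereDense_iff, ← not_nonempty_iff_eq_empty]
  rintro ⟨z₀, hz₀⟩
  obtain ⟨ε, hε, harc⟩ := Metric.mem_nhds_iff.mp (mem_interior_iff_mem_nhds.mp hz₀)
  exact hnz (eqOn_zero_closedBall_of_eqOn_zero_arc hc hd z₀.2 hε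
    fun z hz hzε => harc (show (⟨z, hz⟩ : sphere (0 : ℂ) 1) ∈ ball z₀ ε from hzε))
end
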